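/- There exists a unique bounded function f = (f₀, f₁) : ℝ → ℝ² satisfying the dilation equation f(t) = (1/3)(S₀ f(2t) + S₁ f(2t-1)) for all t ∈ ℝ, together with the boundary conditions f₀(t) = f₁(t) = 0 for t ≤ 0 and f₀(t) = f₁(t) = 1/2 for t ≥ 1, where S₀ is the 2×2 matrix with rows (1,0),(1,1) and S₁ has rows (1,1),(0,1). Moreover, this f satisfies f(1/2) = (1/6, 1/3)ᵀ, and f₀ is Hölder continuous with exponent log₂(3/τ), where τ = (1+√5)/2 is the golden ratio. -/

import Mathlib

open Filter Topology Real
open scoped NNReal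

noncomputable section

/-- The matrix S₀ with rows (1,0),(1,1). -/
def dilS0 : Matrix (Fin 2) (Fin 2) ℝ := !![1, 0; 1, 1]

/-- The matrix S₁ with rows (1,1),(0,1). -/
def dilS1 : Matrix (Fin 2) (Fin 2) ℝ := !![1, 1; 0, 1]

/-- `f = (f₀, f₁) : ℝ → ℝ²` solves the dilation equation
`f(t) = (1/3)(S₀ f(2t) + S₁ f(2t-1))` with the boundary conditions
`f ≡ 0` on `(-∞, 0]` and `f ≡ (1/2, 1/2)ᵀ` on `[1, ∞)`. -/
def IsDilationSolution (f : ℝ → Fin 2 → ℝ) : Prop :=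
  (∀ t : ℝ, f t = (1 / 3 : ℝ) •
      (dilS0.mulVec (f (2 * t)) + dilS1.mulVec (f (2 * t - 1)))) ∧
  (∀ t : ℝ, t ≤ 0 → f t = 0) ∧
  (∀ t : ℝ, 1 ≤ t → f t = fun _ => 1 / 2)

/-!
The dilation operator `T g t = (1/3) (S₀ g(2t) + S₁ g(2t-1))` preserves the boundary conditions,
and for two functions `g, h` satisfying them only one of the two terms of `T g t - T h t` survives
(either `2t - 1 ≤ 0` or `2t ≥ 1`). Since `S₀` and `S₁` have row sums at most `2`, `T` is a
`2/3`-contraction for the uniform extended metric, and Banach's fixed point theorem gives exactly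
one solution at finite uniform distance from a bounded function with these boundary values.

If `t, s` lie in one dyadic interval of length `2⁻ⁿ`, then
`f t - f s = 3⁻ⁿ S_{ε₁} ⋯ S_{εₙ} (f t' - f s')`. Tested against a nonnegative row vector `w`,
the weight `max (w₀ + (τ - 1) w₁) (w₁ + (τ - 1) w₀)` grows by at most the factor `τ` under
`w ↦ w S_ε`, so the oscillation of `f₀` on such intervals is `O((τ/3)ⁿ) = O(2^{-nα})` with
`α = log₂(3/τ)`; comparing `|x - y|` with the dyadic scale gives the Hölder bound.
-/

open scoped UniformConvergence Matrix

lemma edist_ne_top_iff_of_edist_ne_top {α : Type*} [PseudoEMetricSpace α] {x y z : α}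
    (h : edist x y ≠ ⊤) : edist x z ≠ ⊤ ↔ edist y z ≠ ⊤ := by
  constructor <;> intro hz <;> refine ((edist_triangle_left _ _ _).trans_lt
    (ENNReal.add_lt_top.2 ⟨?_, hz.lt_top⟩)).ne
  exacts [h.lt_top, (edist_comm x y ▸ h).lt_top]

theorem ContractingWith.existsUnique_fixedPoint_edist_ne_top' {α : Type*} [EMetricSpace α]
    {K : ℝ≥0} {f : α → α} {s : Set α} (hsc : IsComplete s) (hsf : Set.MapsTo f s s)
    (hf : ContractingWith K (hsf.restrict f s s)) {x : α} (hxs : x ∈ s)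
    (hx : edist x (f x) ≠ ⊤) : ∃! y, y ∈ s ∧ Function.IsFixedPt f y ∧ edist x y ≠ ⊤ := by
  refine ⟨efixedPoint' f hsc hsf hf x hxs hx, ⟨efixedPoint_mem' hsc hsf hf hxs hx,
    efixedPoint_isFixedPt' hsc hsf hf hxs hx, (edist_efixedPoint_lt_top' hsc hsf hf hxs hx).ne⟩, ?_⟩
  rintro y ⟨hys, hyf, hxy⟩
  have hyz : edist y (efixedPoint' f hsc hsf hf x hxs hx) ≠ ⊤ :=
    ((edist_triangle_left _ _ x).trans_lt (ENNReal.add_lt_top.2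
      ⟨hxy.lt_top, edist_efixedPoint_lt_top' hsc hsf hf hxs hx⟩)).ne
  have := hf.eq_or_edist_eq_top_of_fixedPoints (x := ⟨y, hys⟩)
    (y := ⟨_, efixedPoint_mem' hsc hsf hf hxs hx⟩) (Subtype.ext hyf)
    (Subtype.ext (efixedPoint_isFixedPt' hsc hsf hf hxs hx))
  exact congrArg Subtype.val (this.resolve_right hyz)

lemma UniformFun.edist_zero_ofFun_ne_top_iff {α E : Type*} [SeminormedAddCommGroup E]
    {f : α → E} :
    edist (UniformFun.ofFun 0) (UniformFun.ofFun f) ≠ ⊤ ↔ ∃ C, ∀ x, ‖f x‖ ≤ C := by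
  constructor
  · intro h
    refine ⟨(edist (UniformFun.ofFun 0) (UniformFun.ofFun f)).toReal, fun x => ?_⟩
    rw [← dist_zero_left, dist_edist]
    exact ENNReal.toReal_mono h UniformFun.edist_eval_le
  · rintro ⟨C, hC⟩
    refine ne_top_of_le_ne_top (ENNReal.ofReal_ne_top (r := C)) (UniformFun.edist_le.2 fun x => ?_)
    rw [edist_le_ofReal ((norm_nonneg _).trans (hC x))]
    simpa using hC x

lemma exists_forall_norm_le_iff {α ι : Type*} [Fintype ι] {f : α → ι → ℝ} :
    (∃ C, ∀ x, ‖f x‖ ≤ C) ↔ ∃ C, ∀ x i, |f x i| ≤ C := by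
  constructor
  · rintro ⟨C, hC⟩
    exact ⟨C, fun x i => (norm_le_pi_norm (f x) i).trans (hC x)⟩
  · rintro ⟨C, hC⟩
    refine ⟨max C 0, fun x => (pi_norm_le_iff_of_nonneg (le_max_right _ _)).2 fun i => ?_⟩
    exact (hC x i).trans (le_max_left _ _)

lemma Matrix.vecMul_nonneg {m n : Type*} [Fintype m] {A : Matrix m n ℝ}
    (hA : ∀ i j, 0 ≤ A i j) {w : m → ℝ} (hw : 0 ≤ w) : 0 ≤ w ᵥ* A := fun j =>
  show 0 ≤ ∑ i, w i * A i j from Finset.sum_nonneg fun i _ => mul_nonneg (hw i) (hA i j)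

lemma abs_dotProduct_le_sum_mul_norm {ι : Type*} [Fintype ι] {w : ι → ℝ} (hw : 0 ≤ w)
    (v : ι → ℝ) : |w ⬝ᵥ v| ≤ (∑ i, w i) * ‖v‖ := by
  rw [dotProduct, Finset.sum_mul]
  refine (Finset.abs_sum_le_sum_abs _ _).trans (Finset.sum_le_sum fun i _ => ?_)
  rw [abs_mul, abs_of_nonneg (hw i)]
  exact mul_le_mul_of_nonneg_left (norm_le_pi_norm v i) (hw i)

theorem HolderWith.of_dist_le {X Y : Type*} [PseudoMetricSpace X] [PseudoMetricSpace Y]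
    {C r : ℝ≥0} {f : X → Y} (h : ∀ x y, dist (f x) (f y) ≤ C * dist x y ^ (r : ℝ)) :
    HolderWith C r f := fun x y =>
  calc edist (f x) (f y) = ENNReal.ofReal (dist (f x) (f y)) := edist_dist _ _
    _ ≤ ENNReal.ofReal (C * dist x y ^ (r : ℝ)) := ENNReal.ofReal_le_ofReal (h x y)
    _ = C * edist x y ^ (r : ℝ) := by
      rw [ENNReal.ofReal_mul C.coe_nonneg, ENNReal.ofReal_coe_nnreal, edist_dist,
        ENNReal.ofReal_rpow_of_nonneg dist_nonneg r.coe_nonneg]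

section Dyadic

variable {Y : Type*} [PseudoMetricSpace Y] {g : ℝ → Y}

lemma dist_le_two_mul_of_dyadic {ω : ℕ → ℝ}
    (hω : ∀ (n : ℕ) (k : ℤ) (x y : ℝ), 2 ^ n * x ∈ Set.Icc (k : ℝ) (k + 1) →
      2 ^ n * y ∈ Set.Icc (k : ℝ) (k + 1) → dist (g x) (g y) ≤ ω n)
    {n : ℕ} {x y : ℝ} (hxy : 2 ^ n * |x - y| ≤ 1) : dist (g x) (g y) ≤ 2 * ω n := by
  wlog hle : x ≤ y generalizing x y
  · rw [dist_comm]; exact this (abs_sub_comm x y ▸ hxy) (le_of_not_ge hle)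
  have h2n : (0 : ℝ) < 2 ^ n := by positivity
  rw [abs_sub_comm, abs_of_nonneg (sub_nonneg.2 hle)] at hxy
  set k := ⌊2 ^ n * x⌋
  have hxk : 2 ^ n * x ∈ Set.Icc (k : ℝ) (k + 1) := ⟨Int.floor_le _, (Int.lt_floor_add_one _).le⟩
  have hω0 : 0 ≤ ω n := dist_nonneg.trans (hω n k x x hxk hxk)
  by_cases hy : 2 ^ n * y ≤ k + 1
  · exact (hω n k x y hxk ⟨by nlinarith [hxk.1], hy⟩).trans (by linarith)
  · set m : ℝ := (k + 1) / 2 ^ n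
    have hm : 2 ^ n * m = k + 1 := mul_div_cancel₀ _ h2n.ne'
    calc dist (g x) (g y) ≤ dist (g x) (g m) + dist (g m) (g y) := dist_triangle _ _ _
      _ ≤ ω n + ω n := by
        gcongr
        · exact hω n k x m hxk ⟨by linarith, hm.le⟩
        · refine hω n (k + 1) m y ?_ ?_ <;> push_cast
          · exact ⟨hm.ge, by linarith⟩
          · exact ⟨by linarith, by nlinarith [Int.lt_floor_add_one (2 ^ n * x)]⟩
      _ = 2 * ω n := by ring

theorem holderWith_of_dyadic {M : ℝ} {r : ℝ≥0} (hM : ∀ x y, dist (g x) (g y) ≤ M)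
    (hdyadic : ∀ (n : ℕ) (k : ℤ) (x y : ℝ), 2 ^ n * x ∈ Set.Icc (k : ℝ) (k + 1) →
      2 ^ n * y ∈ Set.Icc (k : ℝ) (k + 1) → dist (g x) (g y) ≤ M / (2 ^ (r : ℝ)) ^ n) :
    HolderWith (2 * 2 ^ (r : ℝ) * M).toNNReal r g := by
  have hM0 : 0 ≤ M := dist_nonneg.trans (hM 0 0)
  have h2r : 1 ≤ (2 : ℝ) ^ (r : ℝ) := Real.one_le_rpow (by norm_num) r.coe_nonneg
  refine HolderWith.of_dist_le fun x y => ?_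
  rw [Real.coe_toNNReal _ (by positivity)]
  rcases (dist_nonneg : 0 ≤ dist x y).eq_or_lt with hd | hd
  · rw [← hd, dist_eq_zero.1 hd.symm, dist_self]; positivity
  rcases le_or_gt 1 (dist x y) with hfar | hnear
  · have hprod : 1 ≤ 2 ^ (r : ℝ) * dist x y ^ (r : ℝ) :=
      one_le_mul_of_one_le_of_one_le h2r (Real.one_le_rpow hfar r.coe_nonneg)
    nlinarith [hM x y, mul_le_mul_of_nonneg_left hprod hM0]
  obtain ⟨n, hn, hn'⟩ := exists_nat_pow_near (one_le_one_div hd hnear.le) one_lt_two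
  have hscale : 2 ^ n * |x - y| ≤ 1 := by
    rw [← Real.dist_eq]; rwa [le_div_iff₀ hd] at hn
  have hlt : ((2 : ℝ) ^ (n + 1))⁻¹ < dist x y := inv_lt_of_inv_lt₀ hd (by rwa [← one_div])
  have h2r0 : (0 : ℝ) < 2 ^ (r : ℝ) := by positivity
  calc dist (g x) (g y) ≤ 2 * (M / (2 ^ (r : ℝ)) ^ n) := dist_le_two_mul_of_dyadic hdyadic hscale
    _ = 2 * 2 ^ (r : ℝ) * M * ((2 ^ (r : ℝ)) ^ (n + 1))⁻¹ := by
      rw [pow_succ]; field_simp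
    _ ≤ 2 * 2 ^ (r : ℝ) * M * dist x y ^ (r : ℝ) := by
      rw [Real.rpow_pow_comm zero_le_two, ← Real.inv_rpow (by positivity)]
      gcongr

end Dyadic

namespace Dilation

def op (g : ℝ → Fin 2 → ℝ) (t : ℝ) : Fin 2 → ℝ :=
  (1 / 3 : ℝ) • (dilS0 *ᵥ g (2 * t) + dilS1 *ᵥ g (2 * t - 1))

def HasBoundaryValues (g : ℝ → Fin 2 → ℝ) : Prop :=
  (∀ t : ℝ, t ≤ 0 → g t = 0) ∧ (∀ t : ℝ, 1 ≤ t → g t = fun _ => 1 / 2)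

lemma isDilationSolution_iff {f : ℝ → Fin 2 → ℝ} :
    IsDilationSolution f ↔ op f = f ∧ HasBoundaryValues f := by
  rw [IsDilationSolution, HasBoundaryValues, funext_iff]
  exact and_congr_left' (forall_congr' fun _ => eq_comm)

lemma norm_smul_dilS0_mulVec_le (v : Fin 2 → ℝ) :
    ‖(1 / 3 : ℝ) • (dilS0 *ᵥ v)‖ ≤ 2 / 3 * ‖v‖ := by
  have h0 := norm_le_pi_norm v 0
  have h1 := norm_le_pi_norm v 1
  rw [pi_norm_le_iff_of_nonneg (by positivity)]
  intro i
  fin_cases i <;> simp [dilS0, dotProduct, Fin.sum_univ_two] at h0 h1 ⊢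
  · linarith [abs_nonneg (v 1)]
  · linarith [abs_add_le (v 0) (v 1)]

lemma norm_smul_dilS1_mulVec_le (v : Fin 2 → ℝ) :
    ‖(1 / 3 : ℝ) • (dilS1 *ᵥ v)‖ ≤ 2 / 3 * ‖v‖ := by
  have h0 := norm_le_pi_norm v 0
  have h1 := norm_le_pi_norm v 1
  rw [pi_norm_le_iff_of_nonneg (by positivity)]
  intro i
  fin_cases i <;> simp [dilS1, dotProduct, Fin.sum_univ_two] at h0 h1 ⊢
  · linarith [abs_add_le (v 0) (v 1)]
  · linarith [abs_nonneg (v 0)]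

lemma norm_op_le (g : ℝ → Fin 2 → ℝ) (t : ℝ) :
    ‖op g t‖ ≤ 2 / 3 * ‖g (2 * t)‖ + 2 / 3 * ‖g (2 * t - 1)‖ := by
  rw [op, smul_add]
  exact (norm_add_le _ _).trans
    (add_le_add (norm_smul_dilS0_mulVec_le _) (norm_smul_dilS1_mulVec_le _))

lemma HasBoundaryValues.op {g : ℝ → Fin 2 → ℝ} (hg : HasBoundaryValues g) :
    HasBoundaryValues (op g) := by
  constructor
  · intro t ht
    simp [Dilation.op, hg.1 (2 * t) (by linarith), hg.1 (2 * t - 1) (by linarith)]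
  · intro t ht
    rw [Dilation.op, hg.2 (2 * t) (by linarith), hg.2 (2 * t - 1) (by linarith)]
    ext i
    fin_cases i <;> simp [dilS0, dilS1, dotProduct, Fin.sum_univ_two] <;> norm_num

lemma exists_dist_op_le {g h : ℝ → Fin 2 → ℝ} (hg : HasBoundaryValues g)
    (hh : HasBoundaryValues h) (t : ℝ) :
    ∃ x, dist (op g t) (op h t) ≤ 2 / 3 * dist (g x) (h x) := by
  simp only [dist_eq_norm, Dilation.op, ← smul_sub]
  rcases le_or_gt t (1 / 2) with ht | ht
  · refine ⟨2 * t, ?_⟩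
    rw [hg.1 (2 * t - 1) (by linarith), hh.1 (2 * t - 1) (by linarith), add_sub_add_right_eq_sub,
      ← Matrix.mulVec_sub]
    exact norm_smul_dilS0_mulVec_le _
  · refine ⟨2 * t - 1, ?_⟩
    rw [hg.2 (2 * t) (by linarith), hh.2 (2 * t) (by linarith), add_sub_add_left_eq_sub,
      ← Matrix.mulVec_sub]
    exact norm_smul_dilS1_mulVec_le _

def opUniformFun (g : ℝ →ᵤ (Fin 2 → ℝ)) : ℝ →ᵤ (Fin 2 → ℝ) :=
  UniformFun.ofFun (op (UniformFun.toFun g))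

def boundarySet : Set (ℝ →ᵤ (Fin 2 → ℝ)) := {g | HasBoundaryValues (UniformFun.toFun g)}

lemma isClosed_boundarySet : IsClosed boundarySet := by
  have hev (t : ℝ) : Continuous fun g : ℝ →ᵤ (Fin 2 → ℝ) => UniformFun.toFun g t :=
    (UniformFun.uniformContinuous_eval _ t).continuous
  simp only [boundarySet, HasBoundaryValues, Set.ofPred_and, Set.ofPred_forall]
  refine .inter ?_ ?_ <;>
    exact isClosed_iInter fun t => isClosed_iInter fun _ => isClosed_eq (hev t) continuous_const

lemma mapsTo_opUniformFun : Set.MapsTo opUniformFun boundarySet boundarySet :=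
  fun _ hg => HasBoundaryValues.op hg

lemma contractingWith_opUniformFun :
    ContractingWith (2 / 3)
      (mapsTo_opUniformFun.restrict opUniformFun boundarySet boundarySet) := by
  refine ⟨by rw [← NNReal.coe_lt_coe]; norm_num, ?_⟩
  rw [← mapsTo_opUniformFun.lipschitzOnWith_iff_restrict, UniformFun.lipschitzOnWith_iff]
  intro t g hg h hh
  obtain ⟨x, hx⟩ := exists_dist_op_le hg hh t
  calc edist (UniformFun.toFun (opUniformFun g) t) (UniformFun.toFun (opUniformFun h) t)
      ≤ ENNReal.ofReal ((2 / 3 : ℝ≥0) * dist (UniformFun.toFun g x) (UniformFun.toFun h x)) := by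
        rw [edist_dist]; exact ENNReal.ofReal_le_ofReal (by simpa [opUniformFun] using hx)
    _ = (2 / 3 : ℝ≥0) * edist (UniformFun.toFun g x) (UniformFun.toFun h x) := by
        rw [ENNReal.ofReal_mul NNReal.zero_le_coe, ENNReal.ofReal_coe_nnreal, edist_dist]
    _ ≤ (2 / 3 : ℝ≥0) * edist g h := by gcongr; exact UniformFun.edist_eval_le

def step (t : ℝ) : Fin 2 → ℝ := if 1 ≤ t then fun _ => 1 / 2 else 0

lemma hasBoundaryValues_step : HasBoundaryValues step :=
  ⟨fun t ht => if_neg (by linarith), fun t ht => if_pos ht⟩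

lemma norm_step_le (t : ℝ) : ‖step t‖ ≤ 1 / 2 := by
  unfold step
  split_ifs
  · exact (pi_norm_le_iff_of_nonneg (by norm_num)).2 fun _ => by norm_num
  · simp

theorem existsUnique_bounded_isDilationSolution :
    ∃! f : ℝ → Fin 2 → ℝ, (∃ C : ℝ, ∀ (t : ℝ) (i : Fin 2), |f t i| ≤ C) ∧ IsDilationSolution f := by
  -- the bounded functions are those at finite uniform distance from `step`
  have hstep : edist (UniformFun.ofFun 0) (UniformFun.ofFun step) ≠ ⊤ :=
    UniformFun.edist_zero_ofFun_ne_top_iff.2 ⟨_, norm_step_le⟩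
  have hopstep : edist (UniformFun.ofFun step) (opUniformFun (UniformFun.ofFun step)) ≠ ⊤ := by
    refine (edist_ne_top_iff_of_edist_ne_top hstep).1
      (UniformFun.edist_zero_ofFun_ne_top_iff.2 ⟨2 / 3, fun t => ?_⟩)
    change ‖op step t‖ ≤ 2 / 3
    linarith [norm_op_le step t, norm_step_le (2 * t), norm_step_le (2 * t - 1)]
  refine (UniformFun.ofFun.existsUnique_congr fun f => ?_).2
    (contractingWith_opUniformFun.existsUnique_fixedPoint_edist_ne_top'
      isClosed_boundarySet.isComplete mapsTo_opUniformFun (x := UniformFun.ofFun step)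
      hasBoundaryValues_step hopstep)
  rw [← edist_ne_top_iff_of_edist_ne_top hstep, UniformFun.edist_zero_ofFun_ne_top_iff,
    exists_forall_norm_le_iff, isDilationSolution_iff]
  exact ⟨fun ⟨hb, hfix, hbv⟩ => ⟨hbv, hfix, hb⟩, fun ⟨hbv, hfix, hb⟩ => ⟨hb, hfix, hbv⟩⟩

/-- An extremal norm on the nonnegative cone for `S₀ᵀ` and `S₁ᵀ`: each multiplies it by at most
`τ`, the joint spectral radius of `{S₀, S₁}`. -/
def goldenWeight (w : Fin 2 → ℝ) : ℝ :=
  max (w 0 + (goldenRatio - 1) * w 1) (w 1 + (goldenRatio - 1) * w 0)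

lemma vecMul_dilS0 (w : Fin 2 → ℝ) : w ᵥ* dilS0 = ![w 0 + w 1, w 1] := by
  ext j; fin_cases j <;> simp [dilS0, Matrix.vecMul, dotProduct, Fin.sum_univ_two]

lemma vecMul_dilS1 (w : Fin 2 → ℝ) : w ᵥ* dilS1 = ![w 0, w 0 + w 1] := by
  ext j; fin_cases j <;> simp [dilS1, Matrix.vecMul, dotProduct, Fin.sum_univ_two]

lemma goldenRatio_mul_goldenRatio_sub_one : goldenRatio * (goldenRatio - 1) = 1 := by
  rw [mul_sub, ← sq, goldenRatio_sq]; ring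

lemma add_goldenRatio_mul_le_goldenWeight (w : Fin 2 → ℝ) :
    w 0 + goldenRatio * w 1 ≤ goldenRatio * goldenWeight w :=
  calc w 0 + goldenRatio * w 1 = goldenRatio * (w 1 + (goldenRatio - 1) * w 0) := by
        rw [mul_add, ← mul_assoc, goldenRatio_mul_goldenRatio_sub_one, one_mul, add_comm]
    _ ≤ goldenRatio * goldenWeight w :=
        mul_le_mul_of_nonneg_left (le_max_right _ _) goldenRatio_pos.le

lemma goldenRatio_mul_add_le_goldenWeight (w : Fin 2 → ℝ) :
    goldenRatio * w 0 + w 1 ≤ goldenRatio * goldenWeight w :=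
  calc goldenRatio * w 0 + w 1 = goldenRatio * (w 0 + (goldenRatio - 1) * w 1) := by
        rw [mul_add, ← mul_assoc, goldenRatio_mul_goldenRatio_sub_one, one_mul]
    _ ≤ goldenRatio * goldenWeight w :=
        mul_le_mul_of_nonneg_left (le_max_left _ _) goldenRatio_pos.le

lemma goldenWeight_vecMul_dilS0_le {w : Fin 2 → ℝ} (hw : 0 ≤ w) :
    goldenWeight (w ᵥ* dilS0) ≤ goldenRatio * goldenWeight w := by
  have := add_goldenRatio_mul_le_goldenWeight w
  rw [vecMul_dilS0]
  refine max_le ?_ ?_ <;> simp only [Matrix.cons_val_zero, Matrix.cons_val_one] <;>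
    nlinarith [show 0 ≤ w 0 from hw 0, goldenRatio_lt_two]

lemma goldenWeight_vecMul_dilS1_le {w : Fin 2 → ℝ} (hw : 0 ≤ w) :
    goldenWeight (w ᵥ* dilS1) ≤ goldenRatio * goldenWeight w := by
  have := goldenRatio_mul_add_le_goldenWeight w
  rw [vecMul_dilS1]
  refine max_le ?_ ?_ <;> simp only [Matrix.cons_val_zero, Matrix.cons_val_one] <;>
    nlinarith [show 0 ≤ w 1 from hw 1, goldenRatio_lt_two]

lemma add_le_goldenRatio_mul_goldenWeight {w : Fin 2 → ℝ} (hw : 0 ≤ w) :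
    w 0 + w 1 ≤ goldenRatio * goldenWeight w := by
  nlinarith [goldenRatio_mul_add_le_goldenWeight w, show 0 ≤ w 0 from hw 0, one_lt_goldenRatio]

lemma goldenWeight_one_zero : goldenWeight ![1, 0] = 1 := by
  simp only [goldenWeight, Matrix.cons_val_zero, Matrix.cons_val_one]
  rw [mul_zero, add_zero, mul_one, zero_add, max_eq_left (by linarith [goldenRatio_lt_two])]

lemma dilS0_nonneg (i j : Fin 2) : 0 ≤ dilS0 i j := by
  fin_cases i <;> fin_cases j <;> simp [dilS0]

lemma dilS1_nonneg (i j : Fin 2) : 0 ≤ dilS1 i j := by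
  fin_cases i <;> fin_cases j <;> simp [dilS1]

lemma abs_dotProduct_smul_mulVec_le {A : Matrix (Fin 2) (Fin 2) ℝ} {w d : Fin 2 → ℝ} {K : ℝ}
    {n : ℕ} (hK : 0 ≤ K) (hA : goldenWeight (w ᵥ* A) ≤ goldenRatio * goldenWeight w)
    (h : |(w ᵥ* A) ⬝ᵥ d| ≤ K * goldenWeight (w ᵥ* A) / (3 / goldenRatio) ^ n) :
    |w ⬝ᵥ ((1 / 3 : ℝ) • A *ᵥ d)| ≤ K * goldenWeight w / (3 / goldenRatio) ^ (n + 1) := by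
  have hτ := goldenRatio_pos
  generalize goldenRatio = τ at hτ hA h ⊢
  rw [dotProduct_smul, Matrix.dotProduct_mulVec, smul_eq_mul, abs_mul, abs_of_pos (by norm_num)]
  calc 1 / 3 * |(w ᵥ* A) ⬝ᵥ d| ≤ 1 / 3 * (K * (τ * goldenWeight w) / (3 / τ) ^ n) := by
        gcongr; exact h.trans (by gcongr)
    _ = K * goldenWeight w / (3 / τ) ^ (n + 1) := by
        rw [pow_succ, ← div_div, div_div_eq_mul_div]; ring

end Dilation

namespace IsDilationSolution

open Dilation

variable {f : ℝ → Fin 2 → ℝ}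

lemma sub_eq_of_le_half (hf : IsDilationSolution f) {t s : ℝ} (ht : t ≤ 1 / 2) (hs : s ≤ 1 / 2) :
    f t - f s = (1 / 3 : ℝ) • dilS0 *ᵥ (f (2 * t) - f (2 * s)) := by
  rw [hf.1 t, hf.1 s, hf.2.1 (2 * t - 1) (by linarith), hf.2.1 (2 * s - 1) (by linarith),
    ← smul_sub, add_sub_add_right_eq_sub, Matrix.mulVec_sub]

lemma sub_eq_of_half_le (hf : IsDilationSolution f) {t s : ℝ} (ht : 1 / 2 ≤ t) (hs : 1 / 2 ≤ s) :
    f t - f s = (1 / 3 : ℝ) • dilS1 *ᵥ (f (2 * t - 1) - f (2 * s - 1)) := by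
  rw [hf.1 t, hf.1 s, hf.2.2 (2 * t) (by linarith), hf.2.2 (2 * s) (by linarith),
    ← smul_sub, add_sub_add_left_eq_sub, Matrix.mulVec_sub]

lemma apply_half (hf : IsDilationSolution f) : f (1 / 2) = ![1 / 6, 1 / 3] := by
  rw [hf.1, hf.2.2 (2 * (1 / 2)) (by norm_num), hf.2.1 (2 * (1 / 2) - 1) (by norm_num)]
  ext i
  fin_cases i <;> simp [dilS0, dotProduct, Fin.sum_univ_two] <;> norm_num

theorem abs_dotProduct_sub_le (hf : IsDilationSolution f) {C : ℝ} (hC : ∀ t, ‖f t‖ ≤ C)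
    (n : ℕ) (k : ℤ) {t s : ℝ} (ht : 2 ^ n * t ∈ Set.Icc (k : ℝ) (k + 1))
    (hs : 2 ^ n * s ∈ Set.Icc (k : ℝ) (k + 1)) {w : Fin 2 → ℝ} (hw : 0 ≤ w) :
    |w ⬝ᵥ (f t - f s)| ≤ 2 * C * goldenRatio * goldenWeight w / (3 / goldenRatio) ^ n := by
  have hC0 : 0 ≤ C := (norm_nonneg _).trans (hC 0)
  have hK : 0 ≤ 2 * C * goldenRatio := by have := goldenRatio_pos; positivity
  induction n generalizing k t s w with
  | zero =>
    have hts : ‖f t - f s‖ ≤ 2 * C := (norm_sub_le _ _).trans (by linarith [hC t, hC s])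
    calc |w ⬝ᵥ (f t - f s)| ≤ (∑ i, w i) * (2 * C) :=
          (abs_dotProduct_le_sum_mul_norm hw _).trans
            (mul_le_mul_of_nonneg_left hts (Finset.sum_nonneg fun i _ => hw i))
      _ ≤ goldenRatio * goldenWeight w * (2 * C) := by
          rw [Fin.sum_univ_two]
          exact mul_le_mul_of_nonneg_right (add_le_goldenRatio_mul_goldenWeight hw) (by linarith)
      _ = _ := by ring
  | succ n ih =>
    have h2n : (0 : ℝ) < 2 ^ n := by positivity
    have hpow : (2 : ℝ) ^ (n + 1) = 2 * 2 ^ n := by ring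
    rw [hpow] at ht hs
    rcases le_or_gt (k + 1) (2 ^ n : ℤ) with hk | hk
    · have hk' : (k : ℝ) + 1 ≤ 2 ^ n := by exact_mod_cast hk
      rw [hf.sub_eq_of_le_half (by nlinarith [ht.2]) (by nlinarith [hs.2])]
      refine abs_dotProduct_smul_mulVec_le hK (goldenWeight_vecMul_dilS0_le hw) ?_
      refine ih k ?_ ?_ (Matrix.vecMul_nonneg dilS0_nonneg hw) <;>
        rwa [← mul_assoc, mul_comm _ (2 : ℝ)]
    · have hk' : (2 : ℝ) ^ n ≤ k := by exact_mod_cast Int.lt_add_one_iff.mp hk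
      rw [hf.sub_eq_of_half_le (by nlinarith [ht.1]) (by nlinarith [hs.1])]
      refine abs_dotProduct_smul_mulVec_le hK (goldenWeight_vecMul_dilS1_le hw) ?_
      refine ih (k - 2 ^ n) ?_ ?_ (Matrix.vecMul_nonneg dilS1_nonneg hw) <;> push_cast <;>
        constructor <;> linarith [ht.1, ht.2, hs.1, hs.2]

theorem holderWith_apply_zero (hf : IsDilationSolution f) {C : ℝ} (hC : ∀ t, ‖f t‖ ≤ C) :
    ∃ K : ℝ≥0, HolderWith K (Real.logb 2 (3 / goldenRatio)).toNNReal (fun t => f t 0) := by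
  have hτ := goldenRatio_pos
  have h2r : (2 : ℝ) ^ ((Real.logb 2 (3 / goldenRatio)).toNNReal : ℝ) = 3 / goldenRatio := by
    rw [Real.coe_toNNReal _ (Real.logb_nonneg one_lt_two ?_),
      Real.rpow_logb two_pos (by norm_num) (by positivity)]
    rw [one_le_div hτ]; linarith [goldenRatio_lt_two]
  refine ⟨_, holderWith_of_dyadic (M := 2 * C * goldenRatio) (fun x y => ?_)
    fun n k x y hx hy => ?_⟩
  · have hC0 : 0 ≤ C := (norm_nonneg _).trans (hC 0)
    rw [Real.dist_eq]
    calc |f x 0 - f y 0| ≤ ‖f x - f y‖ := norm_le_pi_norm (f x - f y) 0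
      _ ≤ 2 * C := (norm_sub_le _ _).trans (by linarith [hC x, hC y])
      _ ≤ 2 * C * goldenRatio := le_mul_of_one_le_right (by positivity) one_lt_goldenRatio.le
  · have hw : (0 : Fin 2 → ℝ) ≤ ![1, 0] := fun i => by fin_cases i <;> simp
    have := hf.abs_dotProduct_sub_le hC n k hx hy hw
    rw [goldenWeight_one_zero, mul_one] at this
    rw [h2r, Real.dist_eq]
    simpa [dotProduct, Fin.sum_univ_two] using this

end IsDilationSolution

/-- There is a unique bounded solution f = (f₀, f₁) of the dilation equation with the given
boundary conditions; moreover it satisfies f(1/2) = (1/6, 1/3)ᵀ and f₀ is Hölder continuous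
with exponent log₂(3/τ), where τ is the golden ratio. -/
theorem dilation_solution_exists_unique :
    (∃! f : ℝ → Fin 2 → ℝ,
      (∃ C : ℝ, ∀ (t : ℝ) (i : Fin 2), |f t i| ≤ C) ∧ IsDilationSolution f) ∧
    ∀ f : ℝ → Fin 2 → ℝ,
      (∃ C : ℝ, ∀ (t : ℝ) (i : Fin 2), |f t i| ≤ C) → IsDilationSolution f →
        f (1 / 2) = ![1 / 6, 1 / 3] ∧
        ∃ C : ℝ≥0, HolderWith C (Real.toNNReal (Real.logb 2 (3 / goldenRatio)))
          (fun t => f t 0) := by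
  refine ⟨Dilation.existsUnique_bounded_isDilationSolution, fun f hbdd hf => ⟨hf.apply_half, ?_⟩⟩
  obtain ⟨C, hC⟩ := exists_forall_norm_le_iff.2 hbdd
  exact hf.holderWith_apply_zero hC
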